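/- Let r be a Schwartz function on ℝ with sup_s |r(s)| ≤ η < 1 and |r(−s)| = |r(s)| for all s, let z_0 > 0, and define δ(z) = exp( (1/(2πi)) ∫_{−z_0}^{z_0} log(1−|r(s)|^2)/(s−z) ds ) for z off [−z_0, z_0]. Then there exists a constant C ≥ 1 (depending on r and z_0) such that for all z ∈ ℂ with Im z ≠ 0: C^{−1} ≤ |δ(z)| ≤ C; that is, both |δ(z)| and |δ(z)|^{−1} are uniformly bounded on ℂ ∖ ℝ. -/

import Mathlib

/-- The solution `δ` of the scalar RHP:
`δ(z) = exp((1/2πi) ∫_{−z₀}^{z₀} log(1−|r(s)|²)/(s−z) ds)`. -/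
noncomputable def deltaFn (r : ℝ → ℂ) (z₀ : ℝ) (z : ℂ) : ℂ :=
  Complex.exp ((1 / (2 * (Real.pi : ℂ) * Complex.I)) *
    ∫ s in (-z₀)..z₀, ((Real.log (1 - ‖r s‖ ^ 2) : ℝ) : ℂ) / ((s : ℂ) - z))

/-!
Since `|exp w| = exp (Re w)`, it suffices to bound the real part of the exponent. For `z = x + iy`
with `y ≠ 0`, that real part is `(1/2π) ∫ log(1 - |r(s)|²) · y/((s - x)² + y²) ds`, an integral
against the Poisson kernel, whose total mass over any interval is a difference of two arctangents
and hence less than `π`. With `M = -log(1 - η²) ≥ |log(1 - |r(s)|²)|` the exponent thus has real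
part in `[-M/2, M/2]`, and `C = exp(M/2)` works.
-/

open MeasureTheory intervalIntegral

lemma hasDerivAt_arctan_div_sub (x : ℝ) {y : ℝ} (hy : y ≠ 0) (s : ℝ) :
    HasDerivAt (fun s => Real.arctan ((s - x) / y)) (y / ((s - x) ^ 2 + y ^ 2)) s := by
  refine (((hasDerivAt_id' s).sub_const x).div_const y).arctan.congr_deriv ?_
  field_simp
  ring

lemma integral_poissonKernel (x a b : ℝ) {y : ℝ} (hy : y ≠ 0) :
    ∫ s in a..b, y / ((s - x) ^ 2 + y ^ 2) =
      Real.arctan ((b - x) / y) - Real.arctan ((a - x) / y) :=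
  integral_eq_sub_of_hasDerivAt (fun s _ => hasDerivAt_arctan_div_sub x hy s)
    ((continuous_const.div (by fun_prop) fun s => by positivity).intervalIntegrable _ _)

lemma abs_integral_mul_poissonKernel_le {g : ℝ → ℝ} {M : ℝ} (hg : ∀ s, |g s| ≤ M)
    (x a b : ℝ) {y : ℝ} (hy : y ≠ 0) :
    |∫ s in a..b, g s * (y / ((s - x) ^ 2 + y ^ 2))| ≤ M * Real.pi := by
  have hM : 0 ≤ M := (abs_nonneg _).trans (hg 0)
  have hay : |y| ≠ 0 := abs_ne_zero.2 hy
  have hbound : ∀ s, ‖g s * (y / ((s - x) ^ 2 + y ^ 2))‖ ≤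
      M * (|y| / ((s - x) ^ 2 + |y| ^ 2)) := fun s => by
    rw [sq_abs, Real.norm_eq_abs, abs_mul, abs_div, abs_of_pos (by positivity : 0 < (s - x) ^ 2 + y ^ 2)]
    exact mul_le_mul_of_nonneg_right (hg s) (by positivity)
  have h₁ := Real.arctan_lt_pi_div_two ((b - x) / |y|)
  have h₂ := Real.neg_pi_div_two_lt_arctan ((b - x) / |y|)
  have h₃ := Real.arctan_lt_pi_div_two ((a - x) / |y|)
  have h₄ := Real.neg_pi_div_two_lt_arctan ((a - x) / |y|)
  calc |∫ s in a..b, g s * (y / ((s - x) ^ 2 + y ^ 2))|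
      ≤ |∫ s in a..b, M * (|y| / ((s - x) ^ 2 + |y| ^ 2))| :=
        norm_integral_le_abs_of_norm_le (Filter.Eventually.of_forall hbound)
          ((continuous_const.mul (continuous_const.div (by fun_prop) fun s => by positivity :
            Continuous fun s => |y| / ((s - x) ^ 2 + |y| ^ 2))).intervalIntegrable _ _)
    _ = M * |Real.arctan ((b - x) / |y|) - Real.arctan ((a - x) / |y|)| := by
        rw [intervalIntegral.integral_const_mul, integral_poissonKernel x a b hay, abs_mul, abs_of_nonneg hM]
    _ ≤ M * Real.pi := by
        gcongr
        rw [abs_le]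
        constructor <;> linarith

lemma im_ofReal_div_ofReal_sub (c s : ℝ) (z : ℂ) :
    ((c : ℂ) / ((s : ℂ) - z)).im = c * (z.im / ((s - z.re) ^ 2 + z.im ^ 2)) := by
  rw [Complex.div_im]
  simp [Complex.normSq_apply]
  ring

lemma re_one_div_two_pi_I_mul (w : ℂ) :
    ((1 / (2 * (Real.pi : ℂ) * Complex.I)) * w).re = w.im / (2 * Real.pi) := by
  simp [Complex.mul_re, Complex.normSq_apply]
  field_simp

lemma abs_re_cauchyTransform_le {g : ℝ → ℝ} (hgc : Continuous g) {M : ℝ} (hg : ∀ s, |g s| ≤ M)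
    (a b : ℝ) {z : ℂ} (hz : z.im ≠ 0) :
    |((1 / (2 * (Real.pi : ℂ) * Complex.I)) * ∫ s in a..b, (g s : ℂ) / ((s : ℂ) - z)).re|
      ≤ M / 2 := by
  have hne : ∀ s : ℝ, (s : ℂ) - z ≠ 0 := fun s h => hz (by simpa using congrArg Complex.im h)
  have hint : IntervalIntegrable (fun s : ℝ => (g s : ℂ) / ((s : ℂ) - z)) volume a b :=
    ((Complex.continuous_ofReal.comp hgc).div (by fun_prop) hne).intervalIntegrable _ _
  have him : (∫ s in a..b, (g s : ℂ) / ((s : ℂ) - z)).im =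
      ∫ s in a..b, g s * (z.im / ((s - z.re) ^ 2 + z.im ^ 2)) := by
    rw [← Complex.imCLM_apply, ← Complex.imCLM.intervalIntegral_comp_comm hint]
    simp only [Complex.imCLM_apply, im_ofReal_div_ofReal_sub]
  rw [re_one_div_two_pi_I_mul, him, abs_div, abs_of_pos (by positivity : 0 < 2 * Real.pi),
    div_le_iff₀ (by positivity)]
  calc _ ≤ M * Real.pi := abs_integral_mul_poissonKernel_le hg _ _ _ hz
    _ = M / 2 * (2 * Real.pi) := by ring

lemma abs_log_one_sub_sq_le {t η : ℝ} (ht : 0 ≤ t) (htη : t ≤ η) (hη : η < 1) :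
    |Real.log (1 - t ^ 2)| ≤ -Real.log (1 - η ^ 2) := by
  have hpos : 0 < 1 - η ^ 2 := by nlinarith
  have hle : 1 - η ^ 2 ≤ 1 - t ^ 2 := by nlinarith
  rw [abs_of_nonpos (Real.log_nonpos (hpos.trans_le hle).le (by nlinarith))]
  exact neg_le_neg (Real.log_le_log hpos hle)

theorem delta_uniformly_bounded_general (r : SchwartzMap ℝ ℂ) (η : ℝ) (hη : η < 1)
    (hr : ∀ s : ℝ, ‖r s‖ ≤ η)
    (z₀ : ℝ) :
    ∃ C : ℝ, 1 ≤ C ∧ ∀ z : ℂ, z.im ≠ 0 →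
      C⁻¹ ≤ ‖deltaFn (fun s => r s) z₀ z‖ ∧ ‖deltaFn (fun s => r s) z₀ z‖ ≤ C := by
  set M := -Real.log (1 - η ^ 2)
  have hg : ∀ s, |Real.log (1 - ‖r s‖ ^ 2)| ≤ M := fun s =>
    abs_log_one_sub_sq_le (norm_nonneg _) (hr s) hη
  have hgc : Continuous fun s => Real.log (1 - ‖r s‖ ^ 2) :=
    (continuous_const.sub (r.continuous.norm.pow 2)).log fun s => by
      simp only [Pi.sub_apply, Pi.pow_apply]
      nlinarith [hr s, norm_nonneg (r s)]
  have hM : 0 ≤ M / 2 := by linarith [(abs_nonneg _).trans (hg 0)]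
  refine ⟨Real.exp (M / 2), Real.one_le_exp hM, fun z hz => ?_⟩
  obtain ⟨hlower, hupper⟩ := abs_le.1 (abs_re_cauchyTransform_le hgc hg (-z₀) z₀ hz)
  rw [deltaFn, Complex.norm_exp, ← Real.exp_neg]
  exact ⟨Real.exp_le_exp.2 hlower, Real.exp_le_exp.2 hupper⟩

/-- Uniform two-sided bound: there is `C ≥ 1` such that `C⁻¹ ≤ |δ(z)| ≤ C` for all
`z` off the real axis. -/
theorem delta_uniformly_bounded (r : SchwartzMap ℝ ℂ) (η : ℝ) (hη : η < 1)
    (hr : ∀ s : ℝ, ‖r s‖ ≤ η) (hsym : ∀ s : ℝ, ‖r (-s)‖ = ‖r s‖)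
    (z₀ : ℝ) (hz₀ : 0 < z₀) :
    ∃ C : ℝ, 1 ≤ C ∧ ∀ z : ℂ, z.im ≠ 0 →
      C⁻¹ ≤ ‖deltaFn (fun s => r s) z₀ z‖ ∧ ‖deltaFn (fun s => r s) z₀ z‖ ≤ C :=
  delta_uniformly_bounded_general r η hη hr z₀
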